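/- Let f₁,…,f_N, f₁',…,f_N' ∈ ℝ³, C = Σᵢ₌₁ᴺ (fᵢ' ⊗ fᵢ)(fᵢ' ⊗ fᵢ)ᵀ, and let Q ∈ ℝ^{12×12} be the symmetric matrix with Q acting on x = (vec(E), t) ∈ ℝ¹² by xᵀ Q x = vec(E)ᵀ C vec(E) (i.e. C padded with zeros on the t-block). Let A₁, …, A₆ ∈ ℝ^{12×12} be the symmetric matrices of the quadratic forms of the relaxed constraints, so that xᵀ A₁ x = tᵀt, xᵀ A₂ x = e₁ᵀe₁ − (t₂² + t₃²), xᵀ A₃ x = e₂ᵀe₂ − (t₁² + t₃²), xᵀ A₄ x = e₃ᵀe₃ − (t₁² + t₂²), xᵀ A₅ x = e₁ᵀe₃ + t₁t₃, xᵀ A₆ x = e₂ᵀe₃ + t₂t₃, and set c₁ = 1, c₂ = … = c₆ = 0. Suppose Ê = [t̂]× R̂ is a normalized essential matrix (R̂ ∈ SO(3), t̂ᵀt̂ = 1), x̂ = (vec(Ê), t̂), and there exists λ ∈ ℝ⁶ with Q x̂ = Σᵢ λᵢ Aᵢ x̂ and Q − Σᵢ λᵢ Aᵢ positive semidefinite.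 Then Ê is a global minimizer of the squared epipolar error over all normalized essential matrices: Σᵢ₌₁ᴺ (fᵢᵀ Ê fᵢ')² ≤ Σᵢ₌₁ᴺ (fᵢᵀ E fᵢ')² for every normalized essential matrix E. -/

import Mathlib

/-!
Weak Lagrangian duality. For `E = [t]× R` with `R` orthogonal, the rows of `E` have Gram matrix
`[t]× [t]×ᵀ = |t|² I − t tᵀ`, so `x = (vec(E), t)` satisfies the relaxed constraints
`xᵀ Aᵢ x = cᵢ` whenever `|t| = 1`. Stationarity gives `x̂ᵀ Q x̂ = Σ λᵢ cᵢ`, and positive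
semidefiniteness gives `xᵀ Q x − Σ λᵢ cᵢ = xᵀ (Q − Σ λᵢ Aᵢ) x ≥ 0`; finally `xᵀ Q x` is the
squared epipolar error of `E`.
-/

open Matrix

/-- Kronecker product of two vectors in `ℝ³`, indexed by pairs `(j, i)`. -/
noncomputable def vkron (a b : Fin 3 → ℝ) : Fin 3 × Fin 3 → ℝ := fun p => a p.1 * b p.2

/-- The data matrix `C = Σᵢ (fᵢ' ⊗ fᵢ)(fᵢ' ⊗ fᵢ)ᵀ` of the relative pose problem. -/
noncomputable def dataC {N : ℕ} (f f' : Fin N → Fin 3 → ℝ) :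
    Matrix (Fin 3 × Fin 3) (Fin 3 × Fin 3) ℝ :=
  ∑ i, vecMulVec (vkron (f' i) (f i)) (vkron (f' i) (f i))

/-- Column-wise vectorization of a `3 × 3` matrix, indexed by pairs `(j, i)`. -/
noncomputable def vec3 (M : Matrix (Fin 3) (Fin 3) ℝ) : Fin 3 × Fin 3 → ℝ :=
  fun p => M p.2 p.1

/-- The skew-symmetric cross-product matrix `[t]×` of `t ∈ ℝ³`. -/
noncomputable def skew (t : Fin 3 → ℝ) : Matrix (Fin 3) (Fin 3) ℝ :=
  !![0, -t 2, t 1; t 2, 0, -t 0; -t 1, t 0, 0]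

/-- The `12`-dimensional vector `x = (vec(E), t)`. -/
noncomputable def xvec (E : Matrix (Fin 3) (Fin 3) ℝ) (t : Fin 3 → ℝ) :
    (Fin 3 × Fin 3) ⊕ Fin 3 → ℝ :=
  Sum.elim (vec3 E) t

/-- The `12 × 12` matrix `Q`: the data matrix `C` padded with zeros on the `t`-block,
so that `xᵀ Q x = vec(E)ᵀ C vec(E)` for `x = (vec(E), t)`. -/
noncomputable def Qmat {N : ℕ} (f f' : Fin N → Fin 3 → ℝ) :
    Matrix ((Fin 3 × Fin 3) ⊕ Fin 3) ((Fin 3 × Fin 3) ⊕ Fin 3) ℝ :=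
  Matrix.fromBlocks (dataC f f') 0 0 0

lemma dotProduct_vecMulVec_self_mulVec {n α : Type*} [Fintype n] [CommRing α] (u v : n → α) :
    v ⬝ᵥ (vecMulVec u u *ᵥ v) = (u ⬝ᵥ v) ^ 2 := by
  rw [vecMulVec_mulVec, dotProduct_comm u v]
  simp [dotProduct_smul, sq, dotProduct_comm]

lemma vkron_dotProduct_vec3 (a b : Fin 3 → ℝ) (E : Matrix (Fin 3) (Fin 3) ℝ) :
    vkron a b ⬝ᵥ vec3 E = b ⬝ᵥ (E *ᵥ a) := by
  simp only [dotProduct, vkron, vec3, mulVec, Fintype.sum_prod_type, Finset.mul_sum]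
  rw [Finset.sum_comm]
  exact Finset.sum_congr rfl fun _ _ => Finset.sum_congr rfl fun _ _ => by ring

lemma xvec_dotProduct_Qmat_mulVec {N : ℕ} (f f' : Fin N → Fin 3 → ℝ)
    (E : Matrix (Fin 3) (Fin 3) ℝ) (t : Fin 3 → ℝ) :
    xvec E t ⬝ᵥ (Qmat f f' *ᵥ xvec E t) = ∑ i, (f i ⬝ᵥ (E *ᵥ f' i)) ^ 2 := by
  simp only [xvec, Qmat, fromBlocks_mulVec, zero_mulVec, add_zero, Sum.elim_comp_inl,
    sumElim_dotProduct_sumElim, dotProduct_zero, dataC, sum_mulVec, dotProduct_sum,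
    dotProduct_vecMulVec_self_mulVec, vkron_dotProduct_vec3]

lemma dotProduct_rows_eq_mul_transpose_apply {m n α : Type*} [Fintype n] [CommSemiring α]
    (M : Matrix m n α) (a b : m) : M a ⬝ᵥ M b = (M * Mᵀ) a b := by
  rw [mul_apply']
  rfl

lemma dotProduct_mul_rows_of_transpose_mul_self {n α : Type*} [Fintype n] [DecidableEq n]
    [CommRing α] (M R : Matrix n n α) (hR : Rᵀ * R = 1) (a b : n) :
    (M * R) a ⬝ᵥ (M * R) b = M a ⬝ᵥ M b := by
  have hR' : R * Rᵀ = 1 := mul_eq_one_comm.mp hR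
  rw [dotProduct_rows_eq_mul_transpose_apply, dotProduct_rows_eq_mul_transpose_apply,
    transpose_mul, ← mul_assoc, mul_assoc M, hR', mul_one]

lemma skew_mul_transpose_self (t : Fin 3 → ℝ) :
    skew t * (skew t)ᵀ = (t ⬝ᵥ t) • 1 - vecMulVec t t := by
  ext i j
  fin_cases i <;> fin_cases j <;>
    simp [skew, mul_apply, Fin.sum_univ_three, dotProduct, vecMulVec] <;> ring

lemma dotProduct_skew_mul_rows (t : Fin 3 → ℝ) (R : Matrix (Fin 3) (Fin 3) ℝ)
    (hR : Rᵀ * R = 1) (a b : Fin 3) :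
    (skew t * R) a ⬝ᵥ (skew t * R) b = ((t ⬝ᵥ t) • 1 - vecMulVec t t) a b := by
  rw [dotProduct_mul_rows_of_transpose_mul_self _ _ hR, dotProduct_rows_eq_mul_transpose_apply,
    skew_mul_transpose_self]

/-- The values `xᵀ Aᵢ x` of the six relaxed constraints at `x = (vec(E), t)`. -/
def relaxedConstraint (E : Matrix (Fin 3) (Fin 3) ℝ) (t : Fin 3 → ℝ) : Fin 6 → ℝ :=
  ![t ⬝ᵥ t, E 0 ⬝ᵥ E 0 - (t 1 ^ 2 + t 2 ^ 2), E 1 ⬝ᵥ E 1 - (t 0 ^ 2 + t 2 ^ 2),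
    E 2 ⬝ᵥ E 2 - (t 0 ^ 2 + t 1 ^ 2), E 0 ⬝ᵥ E 2 + t 0 * t 2, E 1 ⬝ᵥ E 2 + t 1 * t 2]

lemma relaxedConstraint_skew_mul {t : Fin 3 → ℝ} {R : Matrix (Fin 3) (Fin 3) ℝ}
    (hR : Rᵀ * R = 1) (ht : t ⬝ᵥ t = 1) :
    relaxedConstraint (skew t * R) t = ![1, 0, 0, 0, 0, 0] := by
  have ht' : t 0 * t 0 + t 1 * t 1 + t 2 * t 2 = 1 := by
    simpa [dotProduct, Fin.sum_univ_three] using ht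
  ext i
  fin_cases i <;>
    simp [relaxedConstraint, dotProduct_skew_mul_rows t R hR, ht, vecMulVec, one_apply] <;> linarith

lemma dotProduct_mulVec_le_of_lagrange_certificate {n ι 𝕜 : Type*} [Fintype n] [Fintype ι]
    [CommRing 𝕜] [PartialOrder 𝕜] [IsOrderedAddMonoid 𝕜] {Q : Matrix n n 𝕜}
    {A : ι → Matrix n n 𝕜} {lam c : ι → 𝕜} {xhat x : n → 𝕜}
    (hxhat : ∀ i, xhat ⬝ᵥ (A i *ᵥ xhat) = c i) (hx : ∀ i, x ⬝ᵥ (A i *ᵥ x) = c i)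
    (hstat : Q *ᵥ xhat = ∑ i, lam i • (A i *ᵥ xhat))
    (hpsd : 0 ≤ x ⬝ᵥ ((Q - ∑ i, lam i • A i) *ᵥ x)) :
    xhat ⬝ᵥ (Q *ᵥ xhat) ≤ x ⬝ᵥ (Q *ᵥ x) := by
  have hdual : ∀ y : n → 𝕜, (∀ i, y ⬝ᵥ (A i *ᵥ y) = c i) →
      y ⬝ᵥ ((∑ i, lam i • A i) *ᵥ y) = ∑ i, lam i * c i := fun y hy => by
    simp only [sum_mulVec, dotProduct_sum, smul_mulVec, dotProduct_smul, smul_eq_mul, hy]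
  have hhat : xhat ⬝ᵥ (Q *ᵥ xhat) = ∑ i, lam i * c i := by
    rw [hstat, ← hdual xhat hxhat, sum_mulVec]
    simp only [smul_mulVec]
  rw [sub_mulVec, dotProduct_sub, hdual x hx, sub_nonneg] at hpsd
  exact hhat.trans_le hpsd

theorem certifier_global_optimality_general {N : ℕ} (f f' : Fin N → Fin 3 → ℝ)
    (A : Fin 6 → Matrix ((Fin 3 × Fin 3) ⊕ Fin 3) ((Fin 3 × Fin 3) ⊕ Fin 3) ℝ)
    (hA1 : ∀ (E : Matrix (Fin 3) (Fin 3) ℝ) (t : Fin 3 → ℝ),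
      xvec E t ⬝ᵥ (A 0 *ᵥ xvec E t) = t ⬝ᵥ t)
    (hA2 : ∀ (E : Matrix (Fin 3) (Fin 3) ℝ) (t : Fin 3 → ℝ),
      xvec E t ⬝ᵥ (A 1 *ᵥ xvec E t) = E 0 ⬝ᵥ E 0 - (t 1 ^ 2 + t 2 ^ 2))
    (hA3 : ∀ (E : Matrix (Fin 3) (Fin 3) ℝ) (t : Fin 3 → ℝ),
      xvec E t ⬝ᵥ (A 2 *ᵥ xvec E t) = E 1 ⬝ᵥ E 1 - (t 0 ^ 2 + t 2 ^ 2))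
    (hA4 : ∀ (E : Matrix (Fin 3) (Fin 3) ℝ) (t : Fin 3 → ℝ),
      xvec E t ⬝ᵥ (A 3 *ᵥ xvec E t) = E 2 ⬝ᵥ E 2 - (t 0 ^ 2 + t 1 ^ 2))
    (hA5 : ∀ (E : Matrix (Fin 3) (Fin 3) ℝ) (t : Fin 3 → ℝ),
      xvec E t ⬝ᵥ (A 4 *ᵥ xvec E t) = E 0 ⬝ᵥ E 2 + t 0 * t 2)
    (hA6 : ∀ (E : Matrix (Fin 3) (Fin 3) ℝ) (t : Fin 3 → ℝ),
      xvec E t ⬝ᵥ (A 5 *ᵥ xvec E t) = E 1 ⬝ᵥ E 2 + t 1 * t 2)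
    (Rhat : Matrix (Fin 3) (Fin 3) ℝ) (hRhat : Rhatᵀ * Rhat = 1)
    (that : Fin 3 → ℝ) (hthat : that ⬝ᵥ that = 1)
    (lam : Fin 6 → ℝ)
    (hstat : Qmat f f' *ᵥ xvec (skew that * Rhat) that =
      ∑ i, lam i • (A i *ᵥ xvec (skew that * Rhat) that))
    (hpsd : ∀ v : (Fin 3 × Fin 3) ⊕ Fin 3 → ℝ,
      0 ≤ v ⬝ᵥ ((Qmat f f' - ∑ i, lam i • A i) *ᵥ v)) :
    ∀ (R : Matrix (Fin 3) (Fin 3) ℝ) (t : Fin 3 → ℝ),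
      Rᵀ * R = 1 → R.det = 1 → t ⬝ᵥ t = 1 →
      ∑ i, (f i ⬝ᵥ ((skew that * Rhat) *ᵥ f' i)) ^ 2 ≤
        ∑ i, (f i ⬝ᵥ ((skew t * R) *ᵥ f' i)) ^ 2 := by
  intro R t hR _ ht
  have hA : ∀ E t i, xvec E t ⬝ᵥ (A i *ᵥ xvec E t) = relaxedConstraint E t i := by
    intro E t i
    fin_cases i
    exacts [hA1 E t, hA2 E t, hA3 E t, hA4 E t, hA5 E t, hA6 E t]
  have hfeasible : ∀ {R t}, Rᵀ * R = 1 → t ⬝ᵥ t = 1 →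
      ∀ i, xvec (skew t * R) t ⬝ᵥ (A i *ᵥ xvec (skew t * R) t) = ![1, 0, 0, 0, 0, 0] i :=
    fun hR ht i => by rw [hA, relaxedConstraint_skew_mul hR ht]
  have hopt := dotProduct_mulVec_le_of_lagrange_certificate (hfeasible hRhat hthat)
    (hfeasible hR ht) hstat (hpsd _)
  rwa [xvec_dotProduct_Qmat_mulVec, xvec_dotProduct_Qmat_mulVec] at hopt

/-- If the normalized essential matrix `Ê = [t̂]× R̂` admits Lagrange multipliers `λ`
with `Q x̂ = Σ λᵢ Aᵢ x̂` and `Q − Σ λᵢ Aᵢ ⪰ 0`, where `A₁, …, A₆` are the symmetric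
matrix forms of the relaxed constraints, then `Ê` globally minimizes the squared
epipolar error over all normalized essential matrices. -/
theorem certifier_global_optimality {N : ℕ} (f f' : Fin N → Fin 3 → ℝ)
    (A : Fin 6 → Matrix ((Fin 3 × Fin 3) ⊕ Fin 3) ((Fin 3 × Fin 3) ⊕ Fin 3) ℝ)
    (hAsymm : ∀ i, (A i).IsSymm)
    (hA1 : ∀ (E : Matrix (Fin 3) (Fin 3) ℝ) (t : Fin 3 → ℝ),
      xvec E t ⬝ᵥ (A 0 *ᵥ xvec E t) = t ⬝ᵥ t)
    (hA2 : ∀ (E : Matrix (Fin 3) (Fin 3) ℝ) (t : Fin 3 → ℝ),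
      xvec E t ⬝ᵥ (A 1 *ᵥ xvec E t) = E 0 ⬝ᵥ E 0 - (t 1 ^ 2 + t 2 ^ 2))
    (hA3 : ∀ (E : Matrix (Fin 3) (Fin 3) ℝ) (t : Fin 3 → ℝ),
      xvec E t ⬝ᵥ (A 2 *ᵥ xvec E t) = E 1 ⬝ᵥ E 1 - (t 0 ^ 2 + t 2 ^ 2))
    (hA4 : ∀ (E : Matrix (Fin 3) (Fin 3) ℝ) (t : Fin 3 → ℝ),
      xvec E t ⬝ᵥ (A 3 *ᵥ xvec E t) = E 2 ⬝ᵥ E 2 - (t 0 ^ 2 + t 1 ^ 2))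
    (hA5 : ∀ (E : Matrix (Fin 3) (Fin 3) ℝ) (t : Fin 3 → ℝ),
      xvec E t ⬝ᵥ (A 4 *ᵥ xvec E t) = E 0 ⬝ᵥ E 2 + t 0 * t 2)
    (hA6 : ∀ (E : Matrix (Fin 3) (Fin 3) ℝ) (t : Fin 3 → ℝ),
      xvec E t ⬝ᵥ (A 5 *ᵥ xvec E t) = E 1 ⬝ᵥ E 2 + t 1 * t 2)
    (Rhat : Matrix (Fin 3) (Fin 3) ℝ) (hRhat : Rhatᵀ * Rhat = 1)
    (hdetRhat : Rhat.det = 1)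
    (that : Fin 3 → ℝ) (hthat : that ⬝ᵥ that = 1)
    (lam : Fin 6 → ℝ)
    (hstat : Qmat f f' *ᵥ xvec (skew that * Rhat) that =
      ∑ i, lam i • (A i *ᵥ xvec (skew that * Rhat) that))
    (hpsd : ∀ v : (Fin 3 × Fin 3) ⊕ Fin 3 → ℝ,
      0 ≤ v ⬝ᵥ ((Qmat f f' - ∑ i, lam i • A i) *ᵥ v)) :
    ∀ (R : Matrix (Fin 3) (Fin 3) ℝ) (t : Fin 3 → ℝ),
      Rᵀ * R = 1 → R.det = 1 → t ⬝ᵥ t = 1 →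
      ∑ i, (f i ⬝ᵥ ((skew that * Rhat) *ᵥ f' i)) ^ 2 ≤
        ∑ i, (f i ⬝ᵥ ((skew t * R) *ᵥ f' i)) ^ 2 :=
  certifier_global_optimality_general f f' A hA1 hA2 hA3 hA4 hA5 hA6 Rhat hRhat that hthat lam hstat
    hpsd
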